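/- Let K be a field of characteristic p, n ≥ 2, κ ∈ F_p^×, and k the integer with 0 < k < p and κk ≡ -1 mod p. Write Q(t,z;κ) = (Q_1,…,Q_n) (the vector of polynomials Q_a = Φ·η_a as above) in the Pochhammer basis: Q(t,z;κ) = ∑_i Q^i(z;κ)(t;κ)_i. Then for every positive integer ℓ, the coordinates of Q^{ℓp-1}(z;κ) sum to zero: ∑_{a=1}^n Q^{ℓp-1}_a(z;κ) = 0. -/

import Mathlib

/-!
Write `A_j(t) = (t - z_j - κ;κ)_k` and `B_j(t) = (t - z_j;κ)_k`. Since `kκ = -1`, the middle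
factor of `Q_c` is `A_c - B_c`, so `∑_c Q_c = ∏ A - ∏ B = Φ(t - κ) - Φ(t)` telescopes. For any
`P`, the difference `P(t) - P(t + κ)` has `(t;κ)_i`-coordinate `-(i+1)κ` times the
`(t;κ)_{i+1}`-coordinate of `P`, because `(t+κ;κ)_{i+1} - (t;κ)_{i+1} = (i+1)κ (t;κ)_i`.
At `i = ℓp - 1` the factor `ℓp` vanishes in characteristic `p`.
-/

open Finset Polynomial

/-- The κ-Pochhammer polynomial `(t;κ)_m = ∏_{i=1}^m (t-(i-1)κ)`. -/
def poch {R : Type*} [CommRing R] (κ t : R) (m : ℕ) : R :=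
  ∏ i ∈ Finset.range m, (t - (i : R) * κ)

/-- The weight polynomial
`Q_c(t,z;κ) = (∏_{j<c}(t-z_j-κ;κ)_k)·(t-z_c-κ;κ)_{k-1}·(∏_{j>c}(t-z_j;κ)_k)`
as an element of `K[z_1,…,z_n][t]`. -/
noncomputable def Qpoly {K : Type*} [Field K] (n k : ℕ) (κ : K) (c : Fin n) :
    Polynomial (MvPolynomial (Fin n) K) :=
  (∏ j ∈ univ.filter (· < c),
      poch (Polynomial.C (MvPolynomial.C κ))
        (Polynomial.X - Polynomial.C (MvPolynomial.X j) -
          Polynomial.C (MvPolynomial.C κ)) k) *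
    poch (Polynomial.C (MvPolynomial.C κ))
      (Polynomial.X - Polynomial.C (MvPolynomial.X c) -
        Polynomial.C (MvPolynomial.C κ)) (k - 1) *
    ∏ j ∈ univ.filter (fun j => c < j),
      poch (Polynomial.C (MvPolynomial.C κ))
        (Polynomial.X - Polynomial.C (MvPolynomial.X j)) k

section Pochhammer

variable {R : Type*} [CommRing R]

theorem poch_zero (κ t : R) : poch κ t 0 = 1 := prod_range_zero _

theorem poch_succ (κ t : R) (m : ℕ) : poch κ t (m + 1) = poch κ t m * (t - m * κ) :=
  prod_range_succ _ _

theorem poch_succ' (κ t : R) (m : ℕ) : poch κ t (m + 1) = t * poch κ (t - κ) m := by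
  rw [poch, poch, prod_range_succ', mul_comm]
  congr 1
  · simp
  · exact prod_congr rfl fun i _ => by push_cast; ring

theorem poch_add_succ_sub_poch_succ (κ t : R) (m : ℕ) :
    poch κ (t + κ) (m + 1) - poch κ t (m + 1) = ((m + 1 : ℕ) : R) * κ * poch κ t m := by
  rw [poch_succ', add_sub_cancel_right, poch_succ]
  push_cast
  ring

theorem map_poch {S : Type*} [CommRing S] (f : R →+* S) (κ t : R) (m : ℕ) :
    f (poch κ t m) = poch (f κ) (f t) m := by
  simp [poch, map_prod]

theorem poch_comp (κ t q : R[X]) (m : ℕ) :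
    (poch κ t m).comp q = poch (κ.comp q) (t.comp q) m :=
  map_poch (compRingHom q) κ t m

theorem poch_X_eq_prod (r : R) (m : ℕ) : poch (C r) X m = ∏ i ∈ range m, (X - C (i * r)) := by
  simp [poch, C_mul]

theorem monic_poch_X (r : R) (m : ℕ) : (poch (C r) X m).Monic := by
  rw [poch_X_eq_prod]
  exact monic_prod_of_monic _ _ fun i _ => monic_X_sub_C _

theorem natDegree_poch_X [Nontrivial R] (r : R) (m : ℕ) : (poch (C r) X m).natDegree = m := by
  rw [poch_X_eq_prod, natDegree_prod_of_monic _ _ fun i _ => monic_X_sub_C _]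
  simp only [natDegree_X_sub_C, sum_const, card_range, smul_eq_mul, mul_one]

end Pochhammer

section PochhammerBasis

variable {R : Type*} [CommRing R] [IsDomain R]

noncomputable def pochBasis (r : R) : Module.Basis ℕ R R[X] :=
  Polynomial.Sequence.basis
    ⟨poch (C r) X, fun m => by
      rw [degree_eq_natDegree (monic_poch_X r m).ne_zero, natDegree_poch_X]⟩
    fun m => by simp [(monic_poch_X r m).leadingCoeff]

theorem pochBasis_apply (r : R) (i : ℕ) : pochBasis r i = poch (C r) X i :=
  Polynomial.Sequence.basis_eq_self _ _ _

theorem pochBasis_repr_sum (r : R) (a : ℕ → R) {N i : ℕ} (hi : i < N) :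
    (pochBasis r).repr (∑ j ∈ range N, C (a j) * poch (C r) X j) i = a i := by
  simp [C_mul', ← pochBasis_apply, Finsupp.single_apply, hi]

theorem pochBasis_repr_sub_comp_X_add_C (r : R) (P : R[X]) (i : ℕ) :
    (pochBasis r).repr (P - P.comp (X + C r)) i =
      -(((i + 1 : ℕ) : R) * r) * (pochBasis r).repr P (i + 1) := by
  let Δ : R[X] →ₗ[R] R[X] := LinearMap.id - (aeval (X + C r)).toLinearMap
  have key : Finsupp.lapply i ∘ₗ (pochBasis r).repr.toLinearMap ∘ₗ Δ =
      (-(((i + 1 : ℕ) : R) * r)) • (Finsupp.lapply (i + 1) ∘ₗ (pochBasis r).repr.toLinearMap) := by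
    refine (pochBasis r).ext fun j => ?_
    rcases j with _ | m
    · have hΔ : Δ (pochBasis r 0) = 0 := by simp [Δ, pochBasis_apply, poch_zero]
      simp [hΔ]
    · have hΔ : Δ (pochBasis r (m + 1)) = -(((m + 1 : ℕ) : R) * r) • pochBasis r m := by
        simp only [Δ, pochBasis_apply, LinearMap.sub_apply, LinearMap.id_apply,
          AlgHom.toLinearMap_apply, ← comp_eq_aeval, poch_comp, X_comp, C_comp]
        rw [← neg_sub, poch_add_succ_sub_poch_succ, ← C_mul']
        simp
      rcases eq_or_ne m i with rfl | h
      · simp [hΔ]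
      · simp [hΔ, h]
  simpa [Δ, comp_eq_aeval] using LinearMap.congr_fun key P

end PochhammerBasis

section MasterPolynomial

variable {K : Type*} [Field K]

noncomputable def masterPoly (n k : ℕ) (κ : K) : Polynomial (MvPolynomial (Fin n) K) :=
  ∏ j, poch (C (MvPolynomial.C κ)) (X - C (MvPolynomial.X j)) k

theorem sum_Qpoly_eq {n k : ℕ} (hk : 0 < k) {κ : K} (hκ : κ * (k : K) = -1) :
    ∑ c, Qpoly n k κ c =
      (masterPoly n k κ).comp (X - C (MvPolynomial.C κ)) - masterPoly n k κ := by
  obtain ⟨m, rfl⟩ := Nat.exists_eq_add_one_of_ne_zero hk.ne'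
  have hshift : ∏ j, poch (C (MvPolynomial.C κ)) (X - C (MvPolynomial.X j) - C (MvPolynomial.C κ))
      (m + 1) = (masterPoly n (m + 1) κ).comp (X - C (MvPolynomial.C κ)) := by
    simp only [masterPoly, Polynomial.prod_comp, poch_comp, sub_comp, X_comp, C_comp,
      sub_right_comm]
  set r : Polynomial (MvPolynomial (Fin n) K) := C (MvPolynomial.C κ) with hr
  have hmr : ((m + 1 : ℕ) : Polynomial (MvPolynomial (Fin n) K)) * r = -1 := by
    rw [hr, ← map_natCast C, ← C_mul, ← map_natCast MvPolynomial.C, ← MvPolynomial.C_mul,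
      mul_comm, hκ]
    simp
  have hstep : ∀ t, poch r t (m + 1) + poch r (t - r) m = poch r (t - r) (m + 1) := by
    intro t
    have h := poch_add_succ_sub_poch_succ r (t - r) m
    rw [sub_add_cancel] at h
    linear_combination h + poch r (t - r) m * hmr
  have htelescope := prod_add_ordered univ (fun j => poch r (X - C (MvPolynomial.X j)) (m + 1))
    (fun j => poch r (X - C (MvPolynomial.X j) - r) m)
  simp only [hstep, hshift] at htelescope
  rw [htelescope, masterPoly, add_sub_cancel_left]
  refine sum_congr rfl fun c _ => ?_
  rw [Qpoly, Nat.add_sub_cancel]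
  ring

end MasterPolynomial

theorem sum_coords_eq_zero_general {p : ℕ} [Fact p.Prime] {K : Type*} [Field K] [CharP K p]
    (n : ℕ) (k : ℕ) (hk : 0 < k) (κ : K)
    (hκ : κ * (k : K) = -1) (ℓ : ℕ) (hℓ : 0 < ℓ)
    (N : ℕ) (hN : ℓ * p - 1 < N)
    (Qc : Fin n → ℕ → MvPolynomial (Fin n) K)
    (hQc : ∀ c : Fin n, Qpoly n k κ c =
      ∑ i ∈ Finset.range N,
        Polynomial.C (Qc c i) *
          poch (Polynomial.C (MvPolynomial.C κ)) Polynomial.X i) :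
    ∑ c : Fin n, Qc c (ℓ * p - 1) = 0 := by
  set r := MvPolynomial.C (σ := Fin n) κ
  set P := (masterPoly n k κ).comp (X - C r)
  have hsum : ∑ c, Qpoly n k κ c = P - P.comp (X + C r) := by
    rw [sum_Qpoly_eq hk hκ, comp_assoc, sub_comp, X_comp, C_comp, add_sub_cancel_right, comp_X]
  have hℓp : ℓ * p - 1 + 1 = ℓ * p := Nat.sub_add_cancel (Nat.mul_pos hℓ (Fact.out : p.Prime).pos)
  calc ∑ c, Qc c (ℓ * p - 1)
      = (pochBasis r).repr (∑ c, Qpoly n k κ c) (ℓ * p - 1) := by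
        rw [map_sum, Finsupp.finsetSum_apply]
        exact sum_congr rfl fun c _ => by rw [hQc, pochBasis_repr_sum _ _ hN]
    _ = -(((ℓ * p : ℕ) : MvPolynomial (Fin n) K) * r) * (pochBasis r).repr P (ℓ * p) := by
        rw [hsum, pochBasis_repr_sub_comp_X_add_C, hℓp]
    _ = 0 := by simp [CharP.cast_eq_zero]

/-- The coordinates of the coefficient vector `Q^{ℓp-1}(z;κ)` in the
Pochhammer-basis expansion `Q = ∑_i Q^i(z;κ)(t;κ)_i` sum to zero. -/
theorem sum_coords_eq_zero {p : ℕ} [Fact p.Prime] {K : Type*} [Field K] [CharP K p]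
    (n : ℕ) (hn : 2 ≤ n) (k : ℕ) (hk : 0 < k) (hkp : k < p) (κ : K)
    (hκ : κ * (k : K) = -1) (ℓ : ℕ) (hℓ : 0 < ℓ)
    (N : ℕ) (hN : ℓ * p - 1 < N)
    (Qc : Fin n → ℕ → MvPolynomial (Fin n) K)
    (hQc : ∀ c : Fin n, Qpoly n k κ c =
      ∑ i ∈ Finset.range N,
        Polynomial.C (Qc c i) *
          poch (Polynomial.C (MvPolynomial.C κ)) Polynomial.X i) :
    ∑ c : Fin n, Qc c (ℓ * p - 1) = 0 :=
  sum_coords_eq_zero_general n k hk κ hκ ℓ hℓ N hN Qc hQc
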